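/- Adding a redundant linear term does not enlarge the SLC decomposition class: if p₃(x) = Σ_i x_i p₂^i(x) + Σ_i (1−x_i) q₂^i(x) + β₂(x) + (d − c^T x) z₂(x) with all of p₂^i, q₂^i, β₂, z₂ convex quadratics, and d − c^T x ≡ Σ_i λ_i x_i + Σ_i θ_i (1−x_i) for some reals λ_i, θ_i, then there exist convex quadratics p̄₂^i, q̄₂^i such that p₃(x) = Σ_i x_i p̄₂^i(x) + Σ_i (1−x_i) q̄₂^i(x) + β₂(x) for all x. -/
import Mathlib

open Matrix Finset

/-- A convex polynomial of degree at most 2: a convex function of the form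
`x ↦ xᵀ M x + rᵀ x + w`. -/
def IsConvexQuad {n : ℕ} (q : (Fin n → ℝ) → ℝ) : Prop :=
  ConvexOn ℝ Set.univ q ∧
    ∃ (M : Matrix (Fin n) (Fin n) ℝ) (r : Fin n → ℝ) (w : ℝ),
      ∀ x, q x = x ⬝ᵥ M.mulVec x + r ⬝ᵥ x + w

lemma quad_convexOn {n : ℕ} (A : Matrix (Fin n) (Fin n) ℝ) (r : Fin n → ℝ) (w : ℝ)
    (hA : ∀ v : Fin n → ℝ, 0 ≤ v ⬝ᵥ A.mulVec v) :
    ConvexOn ℝ Set.univ (fun x => x ⬝ᵥ A.mulVec x + r ⬝ᵥ x + w) := by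
  refine ⟨convex_univ, ?_⟩
  intro x _ y _ a b ha hb hab
  have h := hA (x - y)
  simp only [Matrix.mulVec_sub, dotProduct_sub, sub_dotProduct] at h
  simp only [smul_eq_mul, Matrix.mulVec_add, Matrix.mulVec_smul, dotProduct_add,
    add_dotProduct, dotProduct_smul, smul_dotProduct, smul_eq_mul]
  have key : 0 ≤ a * b * (x ⬝ᵥ A.mulVec x - y ⬝ᵥ A.mulVec x - (x ⬝ᵥ A.mulVec y - y ⬝ᵥ A.mulVec y)) :=
    mul_nonneg (mul_nonneg ha hb) h
  have hb' : b = 1 - a := by linarith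
  subst hb'
  nlinarith [key]

lemma quad_nonneg_of_convex {n : ℕ} (N : Matrix (Fin n) (Fin n) ℝ) (s : Fin n → ℝ) (t : ℝ)
    (hc : ConvexOn ℝ Set.univ (fun x : Fin n → ℝ => x ⬝ᵥ N.mulVec x + s ⬝ᵥ x + t)) :
    ∀ v : Fin n → ℝ, 0 ≤ v ⬝ᵥ N.mulVec v := by
  intro v
  have h := hc.2 (Set.mem_univ v) (Set.mem_univ (0 : Fin n → ℝ))
    (by norm_num : (0:ℝ) ≤ 1/2) (by norm_num : (0:ℝ) ≤ 1/2) (by norm_num)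
  simp only [smul_eq_mul, smul_zero, add_zero, Matrix.mulVec_smul, dotProduct_smul,
    smul_dotProduct, smul_eq_mul, Matrix.mulVec_zero, dotProduct_zero, zero_dotProduct] at h
  nlinarith [h]

lemma quad_bound {n : ℕ} (N : Matrix (Fin n) (Fin n) ℝ) (v : Fin n → ℝ) :
    v ⬝ᵥ N.mulVec v ≤ (∑ k, ∑ l, |N k l|) * ∑ j, v j * v j := by
  have hS : ∀ k, v k * v k ≤ ∑ j, v j * v j := fun k =>
    Finset.single_le_sum (fun j _ => mul_self_nonneg (v j)) (mem_univ k)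
  have hS0 : 0 ≤ ∑ j, v j * v j := Finset.sum_nonneg fun j _ => mul_self_nonneg (v j)
  calc v ⬝ᵥ N.mulVec v = ∑ k, ∑ l, v k * (N k l * v l) := by
        simp [dotProduct, Matrix.mulVec, Finset.mul_sum]
    _ ≤ ∑ k, ∑ l, |N k l| * ∑ j, v j * v j := by
        refine Finset.sum_le_sum fun k _ => Finset.sum_le_sum fun l _ => ?_
        have h1 := hS k; have h2 := hS l
        have := abs_nonneg (N k l)
        rcases abs_cases (N k l) with ⟨he, _⟩ | ⟨he, _⟩ <;>
          nlinarith [sq_nonneg (v k + v l), sq_nonneg (v k - v l)]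
    _ = (∑ k, ∑ l, |N k l|) * ∑ j, v j * v j := by rw [Finset.sum_mul]; simp [Finset.sum_mul]

lemma shift_quadform {n : ℕ} (N : Matrix (Fin n) (Fin n) ℝ) (μ α : ℝ) (v : Fin n → ℝ) :
    v ⬝ᵥ (Matrix.of fun k l => μ * N k l + (if k = l then α else 0)).mulVec v
      = μ * (v ⬝ᵥ N.mulVec v) + α * ∑ j, v j * v j := by
  simp only [dotProduct, Matrix.mulVec, Matrix.of_apply, dotProduct, add_mul, ite_mul, zero_mul,
    Finset.sum_add_distrib, Finset.sum_ite_eq, mem_univ, if_true, Finset.mul_sum]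
  rw [← Finset.sum_add_distrib]
  simp [Finset.mul_sum, mul_add, Finset.sum_add_distrib]
  congr 1
  · exact Finset.sum_congr rfl fun k _ => Finset.sum_congr rfl fun l _ => by ring
  · exact Finset.sum_congr rfl fun k _ => by ring

/-- Adding a redundant linear-times-convex term does not enlarge the SLC
decomposition class. -/
theorem redundant_term_absorbed {n : ℕ} (p₃ : (Fin n → ℝ) → ℝ)
    (p₂ q₂ : Fin n → (Fin n → ℝ) → ℝ) (β₂ z₂ : (Fin n → ℝ) → ℝ)
    (c : Fin n → ℝ) (d : ℝ) (lam θ : Fin n → ℝ)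
    (hp₂ : ∀ i, IsConvexQuad (p₂ i)) (hq₂ : ∀ i, IsConvexQuad (q₂ i))
    (hβ₂ : IsConvexQuad β₂) (hz₂ : IsConvexQuad z₂)
    (hlin : ∀ x : Fin n → ℝ,
      d - c ⬝ᵥ x = ∑ i, lam i * x i + ∑ i, θ i * (1 - x i))
    (hdecomp : ∀ x : Fin n → ℝ,
      p₃ x = ∑ i, x i * p₂ i x + ∑ i, (1 - x i) * q₂ i x + β₂ x
        + (d - c ⬝ᵥ x) * z₂ x) :
    ∃ pbar qbar : Fin n → (Fin n → ℝ) → ℝ,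
      (∀ i, IsConvexQuad (pbar i)) ∧ (∀ i, IsConvexQuad (qbar i)) ∧
      ∀ x : Fin n → ℝ,
        p₃ x = ∑ i, x i * pbar i x + ∑ i, (1 - x i) * qbar i x + β₂ x := by
  obtain ⟨hzc, N, s, t, hz⟩ := hz₂
  set C : ℝ := ∑ k, ∑ l, |N k l| with hC
  set T : ℝ := ∑ i, (|lam i| + |θ i|) with hT
  set α : ℝ := C * T with hα
  have hC0 : 0 ≤ C := Finset.sum_nonneg fun k _ => Finset.sum_nonneg fun l _ => abs_nonneg _
  have hT0 : 0 ≤ T := Finset.sum_nonneg fun i _ => by positivity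
  have hzc' : ConvexOn ℝ Set.univ (fun x : Fin n → ℝ => x ⬝ᵥ N.mulVec x + s ⬝ᵥ x + t) := by
    have : z₂ = fun x => x ⬝ᵥ N.mulVec x + s ⬝ᵥ x + t := funext hz
    rwa [this] at hzc
  have hN0 := quad_nonneg_of_convex N s t hzc'
  -- positivity of the shifted quadratic forms
  have hpos : ∀ μ : ℝ, |μ| ≤ T → ∀ v : Fin n → ℝ,
      0 ≤ v ⬝ᵥ (Matrix.of fun k l => μ * N k l + (if k = l then α else 0)).mulVec v := by
    intro μ hμ v
    rw [shift_quadform]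
    have h1 := hN0 v
    have h2 := quad_bound N v
    have hS0 : 0 ≤ ∑ j, v j * v j := Finset.sum_nonneg fun j _ => mul_self_nonneg (v j)
    have hμC : |μ| * C ≤ α := by
      rw [hα]; calc |μ| * C ≤ T * C := mul_le_mul_of_nonneg_right hμ hC0
        _ = C * T := mul_comm _ _
    rcases abs_cases μ with ⟨he, _⟩ | ⟨he, _⟩ <;> nlinarith
  have hlamT : ∀ i, |lam i| ≤ T :=
    fun i => le_trans (le_add_of_nonneg_right (abs_nonneg (θ i)))
      (Finset.single_le_sum (f := fun j => |lam j| + |θ j|) (fun j _ => by positivity) (mem_univ i))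
  have hθT : ∀ i, |θ i| ≤ T :=
    fun i => le_trans (le_add_of_nonneg_left (abs_nonneg (lam i)))
      (Finset.single_le_sum (f := fun j => |lam j| + |θ j|) (fun j _ => by positivity) (mem_univ i))
  refine ⟨fun i x => p₂ i x + (lam i * z₂ x + α * (∑ j, x j * x j) - α * n * x i),
          fun i x => q₂ i x + (θ i * z₂ x + α * (∑ j, x j * x j)), ?_, ?_, ?_⟩
  · intro i
    have hgp : (fun x : Fin n → ℝ => lam i * z₂ x + α * (∑ j, x j * x j) - α * n * x i)
        = fun x => x ⬝ᵥ (Matrix.of fun k l => lam i * N k l + (if k = l then α else 0)).mulVec x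
          + (fun j => lam i * s j - if j = i then α * n else 0) ⬝ᵥ x + lam i * t := by
      funext x
      rw [shift_quadform, hz x]
      have hr : (fun j => lam i * s j - if j = i then α * n else 0) ⬝ᵥ x
          = lam i * (s ⬝ᵥ x) - α * n * x i := by
        simp [dotProduct, sub_mul, ite_mul, Finset.sum_sub_distrib, Finset.mul_sum,
          Finset.sum_ite_eq', mul_assoc]
      rw [hr]
      simp [dotProduct]
      ring
    constructor
    · have hgc : ConvexOn ℝ Set.univ
          (fun x : Fin n → ℝ => lam i * z₂ x + α * (∑ j, x j * x j) - α * n * x i) := by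
        rw [hgp]; exact quad_convexOn _ _ _ (hpos (lam i) (hlamT i))
      exact (hp₂ i).1.add hgc
    · obtain ⟨Mi, ri, wi, hMi⟩ := (hp₂ i).2
      refine ⟨Mi + Matrix.of fun k l => lam i * N k l + (if k = l then α else 0),
        (fun j => ri j + (lam i * s j - if j = i then α * n else 0)), wi + lam i * t, ?_⟩
      intro x
      have hthis := congrFun hgp x
      simp only [hMi, hthis, Matrix.add_mulVec, dotProduct_add, add_dotProduct]
      have : (fun j => ri j + (lam i * s j - if j = i then α * n else 0)) ⬝ᵥ x
          = ri ⬝ᵥ x + (fun j => lam i * s j - if j = i then α * n else 0) ⬝ᵥ x := by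
        simp [dotProduct, add_mul, Finset.sum_add_distrib]
      rw [this]; ring
  · intro i
    have hgq : (fun x : Fin n → ℝ => θ i * z₂ x + α * (∑ j, x j * x j))
        = fun x => x ⬝ᵥ (Matrix.of fun k l => θ i * N k l + (if k = l then α else 0)).mulVec x
          + (fun j => θ i * s j) ⬝ᵥ x + θ i * t := by
      funext x
      rw [shift_quadform, hz x]
      have hr : (fun j => θ i * s j) ⬝ᵥ x = θ i * (s ⬝ᵥ x) := by
        simp [dotProduct, Finset.mul_sum, mul_assoc]
      rw [hr]
      simp [dotProduct]
      ring
    constructor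
    · have hgc : ConvexOn ℝ Set.univ
          (fun x : Fin n → ℝ => θ i * z₂ x + α * (∑ j, x j * x j)) := by
        rw [hgq]; exact quad_convexOn _ _ _ (hpos (θ i) (hθT i))
      exact (hq₂ i).1.add hgc
    · obtain ⟨Mi, ri, wi, hMi⟩ := (hq₂ i).2
      refine ⟨Mi + Matrix.of fun k l => θ i * N k l + (if k = l then α else 0),
        (fun j => ri j + θ i * s j), wi + θ i * t, ?_⟩
      intro x
      have hthis := congrFun hgq x
      simp only [hMi, hthis, Matrix.add_mulVec, dotProduct_add, add_dotProduct]
      have : (fun j => ri j + θ i * s j) ⬝ᵥ x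
          = ri ⬝ᵥ x + (fun j => θ i * s j) ⬝ᵥ x := by
        simp [dotProduct, add_mul, Finset.sum_add_distrib]
      rw [this]; ring
  · intro x
    rw [hdecomp x, hlin x]
    have hB : ∑ i, lam i * x i * z₂ x = (∑ i, lam i * x i) * z₂ x :=
      (Finset.sum_mul _ _ _).symm
    have hC2 : ∑ i, (α * ∑ j, x j * x j) * x i = (α * ∑ j, x j * x j) * ∑ i, x i :=
      (Finset.mul_sum _ _ _).symm
    have hD : ∑ i, α * (n : ℝ) * (x i * x i) = α * (n : ℝ) * ∑ j, x j * x j :=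
      (Finset.mul_sum _ _ _).symm
    have hB' : ∑ i, θ i * (1 - x i) * z₂ x = (∑ i, θ i * (1 - x i)) * z₂ x :=
      (Finset.sum_mul _ _ _).symm
    have hC' : ∑ i, (α * ∑ j, x j * x j) * (1 - x i) = (α * ∑ j, x j * x j) * ∑ i, (1 - x i) :=
      (Finset.mul_sum _ _ _).symm
    have e1 : ∑ i, x i * (p₂ i x + (lam i * z₂ x + α * (∑ j, x j * x j) - α * n * x i))
        = ∑ i, x i * p₂ i x + (∑ i, lam i * x i) * z₂ x
          + (α * ∑ j, x j * x j) * (∑ i, x i) - α * n * (∑ j, x j * x j) := by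
      calc ∑ i, x i * (p₂ i x + (lam i * z₂ x + α * (∑ j, x j * x j) - α * n * x i))
          = ∑ i, (x i * p₂ i x + lam i * x i * z₂ x
              + (α * ∑ j, x j * x j) * x i - α * (n : ℝ) * (x i * x i)) :=
            Finset.sum_congr rfl fun i _ => by ring
        _ = _ := by
            rw [Finset.sum_sub_distrib, Finset.sum_add_distrib, Finset.sum_add_distrib,
              hB, hC2, hD]
    have e2 : ∑ i, (1 - x i) * (q₂ i x + (θ i * z₂ x + α * (∑ j, x j * x j)))
        = ∑ i, (1 - x i) * q₂ i x + (∑ i, θ i * (1 - x i)) * z₂ x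
          + (α * ∑ j, x j * x j) * (∑ i, (1 - x i)) := by
      calc ∑ i, (1 - x i) * (q₂ i x + (θ i * z₂ x + α * (∑ j, x j * x j)))
          = ∑ i, ((1 - x i) * q₂ i x + θ i * (1 - x i) * z₂ x
              + (α * ∑ j, x j * x j) * (1 - x i)) :=
            Finset.sum_congr rfl fun i _ => by ring
        _ = _ := by
            rw [Finset.sum_add_distrib, Finset.sum_add_distrib, hB', hC']
    have e3 : (∑ i, (1 - x i)) = (n : ℝ) - ∑ i, x i := by
      rw [Finset.sum_sub_distrib]
      simp
    rw [e1, e2, e3]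
    ring
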